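/- Criterion for Poisson commutativity: let q be a finite-dimensional Lie algebra with an f-stable decomposition q = f ⊕ m. The subalgebra Z_{(q,f)} generated by the bi-homogeneous components of all H ∈ S(q)^q is Poisson commutative if and only if for every γ ∈ q*, all nonzero scalars s, s', and all H, H' ∈ S(q)^q, one has γ_f([(d_{φ_s(γ)}H)_f, (d_{φ_{s'}(γ)}H')_f]) = 0, where γ = γ_f + γ_m with γ_f|_m = 0, γ_m|_f = 0, φ_s(γ) = γ_f + sγ_m, and (·)_f is the projection of q onto f. -/

import Mathlib

/-!
Let `σ_{t,s}` scale the coordinates along `f` by `t` and those along `m` by `s`, so that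
`σ_{t,s} H = ∑ tⁱ sʲ H_{ij}`. The chain rule gives `d_γ(σ_{1,s} H) = φ_s(d_{φ_s(γ)} H)`, and for
central `H` the vector `d_{φ_s(γ)} H` stabilises `φ_s(γ)`. Splitting into `f`- and `m`-components,
these stabiliser relations give, for central `H, H'` and `s ≠ s'`,
`{σ_{1,s} H, σ_{1,s'} H'}(γ) = -(1 - s)(1 - s') γ_f([(d_{φ_s(γ)}H)_f, (d_{φ_{s'}(γ)}H')_f])`.

If `Z_{(q,f)}` is Poisson commutative, the left side vanishes, and the right side is a polynomial
in `(s, s')` vanishing off `(s - s')(1 - s)(1 - s') = 0`, hence everywhere. Conversely, since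
`σ_{t,t}` preserves the centre and `σ_{t,s} = σ_{1,s/t} ∘ σ_{t,t}`, the criterion kills
`{σ_{t,s} H, σ_{t',s'} H'}(γ)` on a dense set of `(t, s, t', s')`; as a polynomial in these
parameters its coefficients are the brackets `{H_{ij}, H'_{i'j'}}(γ)`, and the generators of
`Z_{(q,f)}` commute.
-/

namespace PoissonLie

variable {k : Type*} [Field k] [CharZero k] [IsAlgClosed k]
variable {q : Type*} [LieRing q] [LieAlgebra k q]
variable {n : ℕ}

/-- The degree-one polynomial function on `q*` corresponding to `x ∈ q`. -/
noncomputable def lin (b : Module.Basis (Fin n) k q) (x : q) : MvPolynomial (Fin n) k :=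
  ∑ i, MvPolynomial.C (b.repr x i) * MvPolynomial.X i

/-- The Lie--Poisson bracket on `S(q) = k[q*]`, in coordinates. -/
noncomputable def pbr (b : Module.Basis (Fin n) k q) (F G : MvPolynomial (Fin n) k) :
    MvPolynomial (Fin n) k :=
  ∑ i, ∑ j, MvPolynomial.pderiv i F * MvPolynomial.pderiv j G * lin b ⁅b i, b j⁆

/-- The Poisson centre `S(q)^q`. -/
def poissonCentre (b : Module.Basis (Fin n) k q) : Set (MvPolynomial (Fin n) k) :=
  {H | ∀ x : q, pbr b H (lin b x) = 0}

/-- The `(i,j)` bi-homogeneous component of a polynomial, relative to the splitting of the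
variables into the set `S` (spanning `f`) and its complement (spanning `m`). -/
noncomputable def biComponent (S : Finset (Fin n)) (i j : ℕ)
    (H : MvPolynomial (Fin n) k) : MvPolynomial (Fin n) k :=
  ∑ m ∈ H.support.filter
      (fun m => (∑ a ∈ S, m a) = i ∧ (∑ a ∈ Sᶜ, m a) = j),
    MvPolynomial.monomial m (MvPolynomial.coeff m H)

/-- The subalgebra `Z_{(q,f)}` generated by the bi-homogeneous components of all elements
of the Poisson centre. -/
noncomputable def Zalg (b : Module.Basis (Fin n) k q) (S : Finset (Fin n)) :
    Subalgebra k (MvPolynomial (Fin n) k) :=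
  Algebra.adjoin k {P : MvPolynomial (Fin n) k |
    ∃ H ∈ poissonCentre b, ∃ i j : ℕ, P = biComponent S i j H}

/-- Evaluation of a polynomial on `q*` (in coordinates w.r.t. the basis `b`) at `γ : q*`. -/
noncomputable def evalAt (b : Module.Basis (Fin n) k q) (γ : Module.Dual k q) :
    MvPolynomial (Fin n) k →ₐ[k] k :=
  MvPolynomial.aeval (fun i => γ (b i))

/-- The differential at `γ ∈ q*` of a polynomial function `F` on `q*`. -/
noncomputable def diffAt (b : Module.Basis (Fin n) k q) (γ : Module.Dual k q)
    (F : MvPolynomial (Fin n) k) : q :=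
  ∑ i, (evalAt b γ (MvPolynomial.pderiv i F)) • b i

/-- The linear map `φ_s : q → q`, identity on `f` and `s · id` on `m`. -/
noncomputable def phiQ (f m : Submodule k q) (h : IsCompl f m) (s : k) : q →ₗ[k] q :=
  (f.subtype ∘ₗ f.linearProjOfIsCompl m h) + s • (m.subtype ∘ₗ m.linearProjOfIsCompl f h.symm)

/-- The projection of `q` onto `f` along `m`. -/
noncomputable def projF (f m : Submodule k q) (h : IsCompl f m) : q →ₗ[k] q :=
  f.subtype ∘ₗ f.linearProjOfIsCompl m h

/-- `φ_s(γ) = γ_f + s·γ_m` on the dual space; it equals `γ ∘ φ_s`. -/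
noncomputable def phiDual (f m : Submodule k q) (h : IsCompl f m) (s : k)
    (γ : Module.Dual k q) : Module.Dual k q :=
  γ ∘ₗ phiQ f m h s

section Bracket

open MvPolynomial

variable {k : Type*} [Field k] {q : Type*} [LieRing q] [LieAlgebra k q]
variable (b : Module.Basis (Fin n) k q)

theorem lin_neg (x : q) : lin b (-x) = -lin b x := by
  simp [lin]

theorem evalAt_lin (γ : Module.Dual k q) (x : q) : evalAt b γ (lin b x) = γ x := by
  conv_rhs => rw [← b.sum_repr x, map_sum]
  simp [evalAt, lin]

theorem pderiv_lin (j : Fin n) (x : q) : pderiv j (lin b x) = C (b.repr x j) := by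
  simp [lin, pderiv_X, Pi.single_apply]

theorem diffAt_lin (γ : Module.Dual k q) (x : q) : diffAt b γ (lin b x) = x := by
  conv_rhs => rw [← b.sum_repr x]
  simp [diffAt, pderiv_lin, evalAt]

theorem diffAt_sum {ι : Type*} (γ : Module.Dual k q) (s : Finset ι)
    (F : ι → MvPolynomial (Fin n) k) :
    diffAt b γ (∑ a ∈ s, F a) = ∑ a ∈ s, diffAt b γ (F a) := by
  simp only [diffAt, map_sum, Finset.sum_smul]
  exact Finset.sum_comm

theorem diffAt_smul (γ : Module.Dual k q) (c : k) (F : MvPolynomial (Fin n) k) :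
    diffAt b γ (c • F) = c • diffAt b γ F := by
  simp [diffAt, Finset.smul_sum, smul_smul]

theorem evalAt_pbr (γ : Module.Dual k q) (F G : MvPolynomial (Fin n) k) :
    evalAt b γ (pbr b F G) = γ ⁅diffAt b γ F, diffAt b γ G⁆ := by
  simp only [pbr, diffAt, map_sum, map_mul, evalAt_lin, sum_lie, lie_sum, smul_lie, lie_smul,
    map_smul, smul_eq_mul, Finset.mul_sum]
  rw [Finset.sum_comm]
  exact Finset.sum_congr rfl fun i _ => Finset.sum_congr rfl fun j _ => by ring

theorem apply_lie_diffAt_eq_zero {H : MvPolynomial (Fin n) k} (hH : H ∈ poissonCentre b)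
    (γ : Module.Dual k q) (x : q) : γ ⁅diffAt b γ H, x⁆ = 0 := by
  simpa [evalAt_pbr, diffAt_lin] using congrArg (evalAt b γ) (hH x)

theorem eq_zero_of_forall_evalAt [Infinite k] {F : MvPolynomial (Fin n) k}
    (hF : ∀ γ : Module.Dual k q, evalAt b γ F = 0) : F = 0 := by
  refine MvPolynomial.funext fun x => ?_
  have hx : (fun i => (∑ j, x j • b.coord j) (b i)) = x := by
    funext i
    simp [Finsupp.single_apply]
  have hFx := hF (∑ j, x j • b.coord j)
  rw [evalAt, hx] at hFx
  rw [map_zero, ← coe_aeval_eq_eval]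
  exact hFx

noncomputable def pbrDerivation (F : MvPolynomial (Fin n) k) :
    Derivation k (MvPolynomial (Fin n) k) (MvPolynomial (Fin n) k) :=
  ∑ j, (∑ i, pderiv i F * lin b ⁅b i, b j⁆) • pderiv j

theorem pbrDerivation_apply (F G : MvPolynomial (Fin n) k) :
    pbrDerivation b F G = pbr b F G := by
  rw [pbrDerivation, ← Derivation.coeFnAddMonoidHom_apply, map_sum, Finset.sum_apply]
  simp only [Derivation.coeFnAddMonoidHom_apply, Derivation.smul_apply, smul_eq_mul, pbr,
    Finset.sum_mul]
  rw [Finset.sum_comm]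
  exact Finset.sum_congr rfl fun i _ => Finset.sum_congr rfl fun j _ => by ring

theorem pbr_swap (F G : MvPolynomial (Fin n) k) : pbr b G F = -pbr b F G := by
  simp only [pbr, ← Finset.sum_neg_distrib]
  rw [Finset.sum_comm]
  refine Finset.sum_congr rfl fun i _ => Finset.sum_congr rfl fun j _ => ?_
  rw [← lie_skew, lin_neg]
  ring

theorem pbr_eq_zero_of_mem_adjoin {T : Set (MvPolynomial (Fin n) k)}
    (hT : ∀ P ∈ T, ∀ P' ∈ T, pbr b P P' = 0) {F G : MvPolynomial (Fin n) k}
    (hF : F ∈ Algebra.adjoin k T) (hG : G ∈ Algebra.adjoin k T) : pbr b F G = 0 := by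
  have vanish_on_adjoin : ∀ P, (∀ P' ∈ T, pbr b P P' = 0) → ∀ G ∈ Algebra.adjoin k T,
      pbr b P G = 0 := fun P hP G hG => by
    simpa [pbrDerivation_apply] using
      Derivation.eqOn_adjoin (D1 := pbrDerivation b P) (D2 := 0)
        (fun P' hP' => by simpa [pbrDerivation_apply] using hP P' hP') hG
  have hGT : ∀ P ∈ T, pbr b G P = 0 := fun P hP => by
    rw [pbr_swap, vanish_on_adjoin P (hT P hP) G hG, neg_zero]
  rw [pbr_swap, vanish_on_adjoin G hGT F hF, neg_zero]

end Bracket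

section BiScale

open MvPolynomial

variable {R : Type*} [CommSemiring R] (S : Finset (Fin n))

noncomputable def biScale (t s : R) : MvPolynomial (Fin n) R →ₐ[R] MvPolynomial (Fin n) R :=
  aeval fun a => (if a ∈ S then t else s) • X a

theorem biScale_X (t s : R) (a : Fin n) :
    biScale S t s (X a) = (if a ∈ S then t else s) • X a := by
  simp [biScale]

theorem biScale_C (t s c : R) : biScale S t s (C c) = C c := by
  simp [biScale, algebraMap_eq]

theorem biScale_biScale (t s t' s' : R) (F : MvPolynomial (Fin n) R) :
    biScale S t' s' (biScale S t s F) = biScale S (t' * t) (s' * s) F := by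
  have hcomp : (biScale S t' s').comp (biScale S t s) = biScale S (t' * t) (s' * s) :=
    algHom_ext fun a => by by_cases ha : a ∈ S <;> simp [biScale, ha, smul_smul, mul_comm]
  exact DFunLike.congr_fun hcomp F

theorem pderiv_biScale (t s : R) (a : Fin n) (F : MvPolynomial (Fin n) R) :
    pderiv a (biScale S t s F) = (if a ∈ S then t else s) • biScale S t s (pderiv a F) := by
  induction F using MvPolynomial.induction_on with
  | C c => simp
  | add F G hF hG => simp only [map_add, hF, hG, smul_add]
  | mul_X F j hF =>
    rcases eq_or_ne j a with rfl | hja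
    · simp only [map_mul, pderiv_mul, hF, biScale_X, pderiv_X_self, mul_one,
        Derivation.map_smul, map_add, smul_mul_assoc, mul_smul_comm, smul_smul, smul_add]
    · simp only [pderiv_mul, pderiv_X_of_ne hja, mul_zero, add_zero, map_mul, biScale_X,
        mul_smul_comm, Derivation.map_smul, hF, smul_mul_assoc, smul_comm (if a ∈ S then t else s)]

theorem biScale_monomial (t s : R) (d : Fin n →₀ ℕ) (c : R) :
    biScale S t s (monomial d c)
      = (t ^ (∑ a ∈ S, d a) * s ^ (∑ a ∈ Sᶜ, d a)) • monomial d c := by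
  have hscale : ∏ a, (if a ∈ S then t else s) ^ d a
      = t ^ (∑ a ∈ S, d a) * s ^ (∑ a ∈ Sᶜ, d a) := by
    rw [← Finset.prod_mul_prod_compl S, ← Finset.prod_pow_eq_pow_sum,
      ← Finset.prod_pow_eq_pow_sum]
    congr 1 <;> refine Finset.prod_congr rfl fun a ha => ?_
    · rw [if_pos ha]
    · rw [if_neg (Finset.mem_compl.mp ha)]
  rw [monomial_eq, Finsupp.prod_pow, map_mul, biScale_C, map_prod, ← hscale, smul_eq_C_mul,
    map_prod]
  simp only [map_pow, biScale_X, smul_eq_C_mul, mul_pow, Finset.prod_mul_distrib]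
  ring

end BiScale

section BiComponent

open MvPolynomial

variable {k : Type*} [Field k] (S : Finset (Fin n))

theorem sum_add_sum_compl_le_totalDegree {H : MvPolynomial (Fin n) k} {d : Fin n →₀ ℕ}
    (hd : d ∈ H.support) : (∑ a ∈ S, d a) + ∑ a ∈ Sᶜ, d a ≤ H.totalDegree := by
  rw [Finset.sum_add_sum_compl]
  simpa [Finsupp.sum_fintype] using le_totalDegree hd

theorem biComponent_eq_zero_of_totalDegree_lt {i j : ℕ} {H : MvPolynomial (Fin n) k}
    (hij : H.totalDegree < i + j) : biComponent S i j H = 0 :=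
  Finset.sum_eq_zero fun d hd => by
    obtain ⟨hdH, rfl, rfl⟩ := Finset.mem_filter.mp hd
    exact absurd (sum_add_sum_compl_le_totalDegree S hdH) hij.not_ge

theorem biScale_eq_sum_biComponent (t s : k) (H : MvPolynomial (Fin n) k) {D : ℕ}
    (hD : H.totalDegree ≤ D) :
    biScale S t s H = ∑ p ∈ Finset.range (D + 1) ×ˢ Finset.range (D + 1),
      (t ^ p.1 * s ^ p.2) • biComponent S p.1 p.2 H := by
  set bidegree : (Fin n →₀ ℕ) → ℕ × ℕ := fun d => (∑ a ∈ S, d a, ∑ a ∈ Sᶜ, d a)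
  have hmaps : ∀ d ∈ H.support, bidegree d ∈ Finset.range (D + 1) ×ˢ Finset.range (D + 1) :=
    fun d hd => by
      have := sum_add_sum_compl_le_totalDegree S hd
      simp only [bidegree, Finset.mem_product, Finset.mem_range]
      omega
  calc biScale S t s H
      = ∑ d ∈ H.support, (t ^ (bidegree d).1 * s ^ (bidegree d).2) • monomial d (coeff d H) := by
        conv_lhs => rw [H.as_sum, map_sum]
        exact Finset.sum_congr rfl fun d _ => biScale_monomial S t s d _
    _ = ∑ p ∈ Finset.range (D + 1) ×ˢ Finset.range (D + 1),
          ∑ d ∈ H.support with bidegree d = p,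
            (t ^ (bidegree d).1 * s ^ (bidegree d).2) • monomial d (coeff d H) :=
        (Finset.sum_fiberwise_of_maps_to hmaps _).symm
    _ = _ := by
        refine Finset.sum_congr rfl fun p _ => ?_
        rw [biComponent, Finset.smul_sum]
        refine Finset.sum_congr (by simp [bidegree, Prod.ext_iff]) fun d hd => ?_
        obtain ⟨-, h1, h2⟩ := Finset.mem_filter.mp hd
        simp only [bidegree, h1, h2]

end BiComponent

section Projection

variable {k : Type*} [Field k] {q : Type*} [LieRing q] [LieAlgebra k q]
variable {f m : Submodule k q} (h : IsCompl f m)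

theorem projF_eq_projection : projF f m h = f.projection m h := rfl

theorem projF_apply_mem (x : q) : projF f m h x ∈ f := Submodule.projection_apply_mem h x

theorem sub_projF_apply_mem (x : q) : x - projF f m h x ∈ m := Submodule.sub_projection_mem h x

theorem projF_apply_of_mem_left {x : q} (hx : x ∈ f) : projF f m h x = x :=
  Submodule.projection_apply_of_mem_left h hx

theorem phiQ_apply (s : k) (x : q) :
    phiQ f m h s x = projF f m h x + s • (x - projF f m h x) := by
  rw [projF_eq_projection, ← Submodule.projection_eq_self_sub_projection]
  rfl

theorem phiQ_apply_of_mem_left (s : k) {x : q} (hx : x ∈ f) : phiQ f m h s x = x := by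
  simp [phiQ_apply, projF_apply_of_mem_left h hx]

theorem phiQ_apply_of_mem_right (s : k) {x : q} (hx : x ∈ m) : phiQ f m h s x = s • x := by
  simp [phiQ_apply, projF_eq_projection, (Submodule.projection_apply_eq_zero_iff h).mpr hx]

theorem phiDual_apply_of_mem_left (s : k) (γ : Module.Dual k q) {x : q} (hx : x ∈ f) :
    phiDual f m h s γ x = γ x := by
  simp [phiDual, phiQ_apply_of_mem_left h s hx]

theorem phiDual_apply_of_mem_right (s : k) (γ : Module.Dual k q) {x : q} (hx : x ∈ m) :
    phiDual f m h s γ x = s * γ x := by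
  simp [phiDual, phiQ_apply_of_mem_right h s hx]

end Projection

section Scaling

open MvPolynomial

variable {k : Type*} [Field k] {q : Type*} [LieRing q] [LieAlgebra k q]
variable (b : Module.Basis (Fin n) k q) (S : Finset (Fin n))

theorem evalAt_biScale_one {f m : Submodule k q} (h : IsCompl f m) (hbf : ∀ i ∈ S, b i ∈ f)
    (hbm : ∀ i ∉ S, b i ∈ m) (s : k) (γ : Module.Dual k q) (F : MvPolynomial (Fin n) k) :
    evalAt b γ (biScale S 1 s F) = evalAt b (phiDual f m h s γ) F := by
  have hcomp : (evalAt b γ).comp (biScale S 1 s) = evalAt b (phiDual f m h s γ) :=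
    algHom_ext fun i => by
      by_cases hi : i ∈ S
      · simp [evalAt, biScale_X, hi, phiDual_apply_of_mem_left h s γ (hbf i hi)]
      · simp [evalAt, biScale_X, hi, phiDual_apply_of_mem_right h s γ (hbm i hi)]
  exact DFunLike.congr_fun hcomp F

theorem diffAt_biScale_one {f m : Submodule k q} (h : IsCompl f m) (hbf : ∀ i ∈ S, b i ∈ f)
    (hbm : ∀ i ∉ S, b i ∈ m) (s : k) (γ : Module.Dual k q) (F : MvPolynomial (Fin n) k) :
    diffAt b γ (biScale S 1 s F) = phiQ f m h s (diffAt b (phiDual f m h s γ) F) := by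
  simp only [diffAt, map_sum, map_smul]
  refine Finset.sum_congr rfl fun i _ => ?_
  rw [pderiv_biScale, map_smul, evalAt_biScale_one b S h hbf hbm, smul_eq_mul]
  by_cases hi : i ∈ S
  · rw [if_pos hi, one_mul, phiQ_apply_of_mem_left h s (hbf i hi)]
  · rw [if_neg hi, phiQ_apply_of_mem_right h s (hbm i hi), smul_smul, mul_comm s]

theorem biScale_lin (t : k) (x : q) : biScale S t t (lin b x) = t • lin b x := by
  simp [lin, biScale_X, Finset.smul_sum]

theorem biScale_mem_poissonCentre (t : k) {H : MvPolynomial (Fin n) k}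
    (hH : H ∈ poissonCentre b) : biScale S t t H ∈ poissonCentre b := by
  intro x
  have hcomm : pbr b (biScale S t t H) (lin b x) = biScale S t t (pbr b H (lin b x)) := by
    simp only [pbr, map_sum, map_mul, pderiv_biScale, pderiv_lin, biScale_C, biScale_lin,
      ite_self, smul_mul_assoc, mul_smul_comm]
  rw [hcomm, hH x, map_zero]

end Scaling

section KeyIdentity

variable {k : Type*} [Field k] {q : Type*} [LieRing q] [LieAlgebra k q]
variable {f : LieSubalgebra k q} {m : Submodule k q} (h : IsCompl f.toSubmodule m)

/-- Evaluating the two stabiliser conditions at `v_f, v_m, u_f, u_m` gives four linear relations;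
for `s ≠ s'` they force `γ ([u_m, v_m]_f) = -γ [u_f, v_f]`. -/
theorem apply_lie_add_smul_eq (hfm : ∀ a ∈ f, ∀ v ∈ m, ⁅a, v⁆ ∈ m) (γ : Module.Dual k q)
    {s s' : k} (hss' : s ≠ s') {uf um vf vm : q} (huf : uf ∈ f) (hum : um ∈ m) (hvf : vf ∈ f)
    (hvm : vm ∈ m) (hu : ∀ x, phiDual f.toSubmodule m h s γ ⁅uf + um, x⁆ = 0)
    (hv : ∀ x, phiDual f.toSubmodule m h s' γ ⁅vf + vm, x⁆ = 0) :
    γ ⁅uf + s • um, vf + s' • vm⁆ = -((1 - s) * (1 - s')) * γ ⁅uf, vf⁆ := by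
  have hmf : ∀ a ∈ m, ∀ c ∈ f, ⁅a, c⁆ ∈ m := fun a ha c hc => by
    rw [← lie_skew]
    exact m.neg_mem (hfm c hc a ha)
  obtain ⟨wf, hwf, wm, hwm, hw⟩ : ∃ wf ∈ f.toSubmodule, ∃ wm ∈ m, wf + wm = ⁅um, vm⁆ :=
    Submodule.mem_sup.mp (h.sup_eq_top ▸ Submodule.mem_top)
  have E1 : γ ⁅uf, vf⁆ + s * γ ⁅um, vf⁆ = 0 := by
    simpa only [add_lie, map_add, phiDual_apply_of_mem_left h s γ (f.lie_mem huf hvf),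
      phiDual_apply_of_mem_right h s γ (hmf um hum vf hvf)] using hu vf
  have E2 : s * γ ⁅uf, vm⁆ + (γ wf + s * γ wm) = 0 := by
    simpa only [add_lie, ← hw, map_add, phiDual_apply_of_mem_right h s γ (hfm uf huf vm hvm),
      phiDual_apply_of_mem_left h s γ hwf, phiDual_apply_of_mem_right h s γ hwm] using hu vm
  have E3 : γ ⁅uf, vf⁆ + s' * γ ⁅uf, vm⁆ = 0 := by
    have := hv uf
    rw [add_lie, map_add, phiDual_apply_of_mem_left h s' γ (f.lie_mem hvf huf),
      phiDual_apply_of_mem_right h s' γ (hmf vm hvm uf huf), ← lie_skew vf uf, ← lie_skew vm uf,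
      map_neg, map_neg] at this
    linear_combination -this
  have E4 : s' * γ ⁅um, vf⁆ + (γ wf + s' * γ wm) = 0 := by
    have := hv um
    rw [add_lie, map_add, ← lie_skew vm um, ← hw, map_neg, map_add,
      phiDual_apply_of_mem_right h s' γ (hfm vf hvf um hum), phiDual_apply_of_mem_left h s' γ hwf,
      phiDual_apply_of_mem_right h s' γ hwm, ← lie_skew vf um, map_neg] at this
    linear_combination -this
  have hwf_eq : γ wf = -γ ⁅uf, vf⁆ := by
    have : (s - s') * (γ ⁅uf, vf⁆ + γ wf) = 0 := by
      linear_combination s * E3 + s * E4 - s' * E1 - s' * E2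
    linear_combination (mul_eq_zero.mp this).resolve_left (sub_ne_zero.mpr hss')
  simp only [lie_add, add_lie, lie_smul, smul_lie, map_add, map_smul, smul_eq_mul, ← hw]
  linear_combination E1 + (1 - s) * E3 + s' * E2 + (s * s' - s') * hwf_eq

end KeyIdentity

section PolynomialIdentity

open MvPolynomial

variable {R : Type*} {σ : Type*}

theorem eq_zero_of_eval_eq_zero_of_eval_ne_zero [CommRing R] [IsDomain R] [Infinite R]
    {W g : MvPolynomial σ R} (hg : g ≠ 0) (hW : ∀ x, eval x g ≠ 0 → eval x W = 0) : W = 0 := by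
  have hWg : W * g = 0 := MvPolynomial.funext fun x => by
    by_cases hx : eval x g = 0 <;> simp [hx, hW]
  exact (mul_eq_zero.mp hWg).resolve_right hg

theorem coeff_sum_monomial_of_injective [CommSemiring R] {ι : Type*} [DecidableEq ι]
    {μ : ι → σ →₀ ℕ} (hμ : μ.Injective) (U : Finset ι) (c : ι → R) (i : ι) :
    coeff (μ i) (∑ j ∈ U, monomial (μ j) (c j)) = if i ∈ U then c i else 0 := by
  classical
  simp [coeff_sum, coeff_monomial, hμ.eq_iff]

end PolynomialIdentity

section ProjBracket

open MvPolynomial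

variable {k : Type*} [Field k] {q : Type*} [LieRing q] [LieAlgebra k q]
variable (b : Module.Basis (Fin n) k q) (S : Finset (Fin n))

/-- `γ_f([(d_{φ_s(γ)} H)_f, (d_{φ_{s'}(γ)} H')_f])`. -/
noncomputable def projBracket {f m : Submodule k q} (h : IsCompl f m) (γ : Module.Dual k q)
    (s s' : k) (H H' : MvPolynomial (Fin n) k) : k :=
  γ (projF f m h ⁅projF f m h (diffAt b (phiDual f m h s γ) H),
    projF f m h (diffAt b (phiDual f m h s' γ) H')⁆)

noncomputable def scaledEval (γ : Module.Dual k q) {N : ℕ} (i : Fin N) :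
    MvPolynomial (Fin n) k →ₐ[k] MvPolynomial (Fin N) k :=
  aeval fun a => if a ∈ S then C (γ (b a)) else C (γ (b a)) * X i

variable {f m : Submodule k q} (h : IsCompl f m)

theorem eval_scaledEval (hbf : ∀ i ∈ S, b i ∈ f) (hbm : ∀ i ∉ S, b i ∈ m)
    (γ : Module.Dual k q) {N : ℕ} (i : Fin N) (x : Fin N → k) (F : MvPolynomial (Fin n) k) :
    eval x (scaledEval b S γ i F) = evalAt b (phiDual f m h (x i) γ) F := by
  have hcomp : (aeval x).comp (scaledEval b S γ i) = evalAt b (phiDual f m h (x i) γ) :=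
    algHom_ext fun a => by
      by_cases ha : a ∈ S
      · simp [scaledEval, evalAt, ha, phiDual_apply_of_mem_left h _ γ (hbf a ha)]
      · simp [scaledEval, evalAt, ha, phiDual_apply_of_mem_right h _ γ (hbm a ha), mul_comm]
  rw [← coe_aeval_eq_eval]
  exact DFunLike.congr_fun hcomp F

theorem exists_eval_eq_projBracket (hbf : ∀ i ∈ S, b i ∈ f) (hbm : ∀ i ∉ S, b i ∈ m)
    (γ : Module.Dual k q) (H H' : MvPolynomial (Fin n) k) :
    ∃ W : MvPolynomial (Fin 2) k, ∀ x, eval x W = projBracket b h γ (x 0) (x 1) H H' := by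
  refine ⟨∑ i, ∑ j, scaledEval b S γ 0 (pderiv i H) * scaledEval b S γ 1 (pderiv j H')
    * C (γ (projF f m h ⁅projF f m h (b i), projF f m h (b j)⁆)), fun x => ?_⟩
  simp only [projBracket, map_sum, map_mul, eval_C, eval_scaledEval b S h hbf hbm, diffAt, sum_lie,
    lie_sum, smul_lie, lie_smul, map_smul, smul_eq_mul, Finset.mul_sum]
  rw [Finset.sum_comm]
  exact Finset.sum_congr rfl fun i _ => Finset.sum_congr rfl fun j _ => by ring

end ProjBracket

section Criterion

open MvPolynomial

variable {k : Type*} [Field k] {q : Type*} [LieRing q] [LieAlgebra k q]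
variable (b : Module.Basis (Fin n) k q) (S : Finset (Fin n))

theorem biComponent_mem_Zalg (i j : ℕ) {H : MvPolynomial (Fin n) k} (hH : H ∈ poissonCentre b) :
    biComponent S i j H ∈ Zalg b S :=
  Algebra.subset_adjoin ⟨H, hH, i, j, rfl⟩

theorem biScale_mem_Zalg (t s : k) {H : MvPolynomial (Fin n) k} (hH : H ∈ poissonCentre b) :
    biScale S t s H ∈ Zalg b S := by
  rw [biScale_eq_sum_biComponent S t s H le_rfl]
  exact Subalgebra.sum_mem _ fun p _ =>
    Subalgebra.smul_mem _ (biComponent_mem_Zalg b S p.1 p.2 hH) _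

theorem exists_eval_eq_evalAt_pbr_biScale (γ : Module.Dual k q) (H H' : MvPolynomial (Fin n) k) :
    ∃ W : MvPolynomial (Fin 4) k,
      (∀ x, eval x W = evalAt b γ (pbr b (biScale S (x 0) (x 1) H) (biScale S (x 2) (x 3) H')))
      ∧ ∀ i j i' j', coeff (Finsupp.equivFunOnFinite.symm ![i, j, i', j']) W
          = evalAt b γ (pbr b (biComponent S i j H) (biComponent S i' j' H')) := by
  set D := max H.totalDegree H'.totalDegree
  set T := Finset.range (D + 1) ×ˢ Finset.range (D + 1)
  let exponent : (ℕ × ℕ) × (ℕ × ℕ) → Fin 4 →₀ ℕ := fun p =>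
    Finsupp.equivFunOnFinite.symm ![p.1.1, p.1.2, p.2.1, p.2.2]
  let e : (ℕ × ℕ) × (ℕ × ℕ) → k := fun p =>
    evalAt b γ (pbr b (biComponent S p.1.1 p.1.2 H) (biComponent S p.2.1 p.2.2 H'))
  have hexponent : exponent.Injective := fun p p' hp => by
    simpa [exponent, Prod.ext_iff, and_assoc] using hp
  refine ⟨∑ p ∈ T ×ˢ T, monomial (exponent p) (e p), fun x => ?_, fun i j i' j' => ?_⟩
  · rw [biScale_eq_sum_biComponent S _ _ H (le_max_left _ H'.totalDegree),
      biScale_eq_sum_biComponent S _ _ H' (le_max_right H.totalDegree _), evalAt_pbr, diffAt_sum,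
      diffAt_sum, Finset.sum_product]
    simp only [map_sum, eval_monomial, Finsupp.prod_pow, Fin.prod_univ_four, diffAt_smul, sum_lie,
      lie_sum, smul_lie, lie_smul, map_smul, smul_eq_mul, e, exponent, evalAt_pbr, Finset.mul_sum]
    conv_rhs => rw [Finset.sum_comm]
    refine Finset.sum_congr rfl fun p _ => Finset.sum_congr rfl fun p' _ => ?_
    simp only [Finsupp.equivFunOnFinite_symm_apply_apply, Matrix.cons_val]
    ring
  · rw [coeff_sum_monomial_of_injective hexponent (T ×ˢ T) e ((i, j), (i', j'))]
    split_ifs with hmem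
    · rfl
    have := le_max_left H.totalDegree H'.totalDegree
    have := le_max_right H.totalDegree H'.totalDegree
    simp only [T, Finset.mem_product, Finset.mem_range] at hmem
    rcases (by omega : H.totalDegree < i + j ∨ H'.totalDegree < i' + j') with hlt | hlt <;>
      simp [biComponent_eq_zero_of_totalDegree_lt S hlt, pbr]

variable {f : LieSubalgebra k q} {m : Submodule k q} (h : IsCompl f.toSubmodule m)

theorem evalAt_pbr_biScale_one (hfm : ∀ a ∈ f, ∀ v ∈ m, ⁅a, v⁆ ∈ m) (hbf : ∀ i ∈ S, b i ∈ f)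
    (hbm : ∀ i ∉ S, b i ∈ m) (γ : Module.Dual k q) {s s' : k} (hss' : s ≠ s')
    {H H' : MvPolynomial (Fin n) k} (hH : H ∈ poissonCentre b) (hH' : H' ∈ poissonCentre b) :
    evalAt b γ (pbr b (biScale S 1 s H) (biScale S 1 s' H'))
      = -((1 - s) * (1 - s')) * projBracket b h γ s s' H H' := by
  rw [projBracket, evalAt_pbr, diffAt_biScale_one b S h hbf hbm,
    diffAt_biScale_one b S h hbf hbm, phiQ_apply, phiQ_apply,
    apply_lie_add_smul_eq h hfm γ hss' (projF_apply_mem h _) (sub_projF_apply_mem h _)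
      (projF_apply_mem h _) (sub_projF_apply_mem h _)
      (by simpa only [add_sub_cancel] using apply_lie_diffAt_eq_zero b hH _)
      (by simpa only [add_sub_cancel] using apply_lie_diffAt_eq_zero b hH' _),
    projF_apply_of_mem_left h (f.lie_mem (projF_apply_mem h _) (projF_apply_mem h _))]

theorem projBracket_eq_zero_of_pbr_eq_zero [Infinite k] (hfm : ∀ a ∈ f, ∀ v ∈ m, ⁅a, v⁆ ∈ m)
    (hbf : ∀ i ∈ S, b i ∈ f) (hbm : ∀ i ∉ S, b i ∈ m)
    (hZ : ∀ F ∈ Zalg b S, ∀ G ∈ Zalg b S, pbr b F G = 0) (γ : Module.Dual k q) (s s' : k)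
    {H H' : MvPolynomial (Fin n) k} (hH : H ∈ poissonCentre b) (hH' : H' ∈ poissonCentre b) :
    projBracket b h γ s s' H H' = 0 := by
  obtain ⟨W, hW⟩ := exists_eval_eq_projBracket b S h hbf hbm γ H H'
  have hg : ((X 0 - X 1) * (1 - X 0) * (1 - X 1) : MvPolynomial (Fin 2) k) ≠ 0 := by
    refine mul_ne_zero (mul_ne_zero ?_ ?_) ?_ <;> intro h0
    · simpa using congrArg (eval ![1, 0]) h0
    · simpa using congrArg (eval 0) h0
    · simpa using congrArg (eval 0) h0
  have hW0 : W = 0 := eq_zero_of_eval_eq_zero_of_eval_ne_zero hg fun x hx => by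
    simp only [map_mul, map_sub, map_one, eval_X, mul_ne_zero_iff, sub_ne_zero] at hx
    obtain ⟨⟨hx01, hx0⟩, hx1⟩ := hx
    have key := evalAt_pbr_biScale_one b S h hfm hbf hbm γ hx01 hH hH'
    rw [hZ _ (biScale_mem_Zalg b S _ _ hH) _ (biScale_mem_Zalg b S _ _ hH'), map_zero,
      eq_comm, mul_eq_zero] at key
    rw [hW]
    exact key.resolve_left (neg_ne_zero.mpr (mul_ne_zero (sub_ne_zero.mpr hx0)
      (sub_ne_zero.mpr hx1)))
  simpa [hW0] using (hW ![s, s']).symm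

theorem evalAt_pbr_biScale_eq_zero (hfm : ∀ a ∈ f, ∀ v ∈ m, ⁅a, v⁆ ∈ m)
    (hbf : ∀ i ∈ S, b i ∈ f) (hbm : ∀ i ∉ S, b i ∈ m)
    (hcond : ∀ (γ : Module.Dual k q) (s s' : k), s ≠ 0 → s' ≠ 0 →
      ∀ H ∈ poissonCentre b, ∀ H' ∈ poissonCentre b,
        projBracket b h γ s s' H H' = 0)
    (γ : Module.Dual k q) {t s t' s' : k} (ht : t ≠ 0) (hs : s ≠ 0) (ht' : t' ≠ 0)
    (hs' : s' ≠ 0) (hne : s * t' ≠ s' * t) {H H' : MvPolynomial (Fin n) k}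
    (hH : H ∈ poissonCentre b) (hH' : H' ∈ poissonCentre b) :
    evalAt b γ (pbr b (biScale S t s H) (biScale S t' s' H')) = 0 := by
  have hsplit : ∀ {t s : k}, t ≠ 0 → ∀ F : MvPolynomial (Fin n) k,
      biScale S t s F = biScale S 1 (s / t) (biScale S t t F) := fun ht F => by
    rw [biScale_biScale, one_mul, div_mul_cancel₀ _ ht]
  rw [hsplit ht, hsplit ht', evalAt_pbr_biScale_one b S h hfm hbf hbm γ
      (fun heq => hne ((div_eq_div_iff ht ht').mp heq)) (biScale_mem_poissonCentre b S t hH)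
      (biScale_mem_poissonCentre b S t' hH'),
    hcond γ _ _ (div_ne_zero hs ht) (div_ne_zero hs' ht') _ (biScale_mem_poissonCentre b S t hH)
      _ (biScale_mem_poissonCentre b S t' hH'), mul_zero]

theorem pbr_biComponent_eq_zero [Infinite k] (hfm : ∀ a ∈ f, ∀ v ∈ m, ⁅a, v⁆ ∈ m)
    (hbf : ∀ i ∈ S, b i ∈ f) (hbm : ∀ i ∉ S, b i ∈ m)
    (hcond : ∀ (γ : Module.Dual k q) (s s' : k), s ≠ 0 → s' ≠ 0 →
      ∀ H ∈ poissonCentre b, ∀ H' ∈ poissonCentre b,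
        projBracket b h γ s s' H H' = 0)
    {H H' : MvPolynomial (Fin n) k} (hH : H ∈ poissonCentre b) (hH' : H' ∈ poissonCentre b)
    (i j i' j' : ℕ) : pbr b (biComponent S i j H) (biComponent S i' j' H') = 0 := by
  refine eq_zero_of_forall_evalAt b fun γ => ?_
  obtain ⟨W, hW, hWcoeff⟩ := exists_eval_eq_evalAt_pbr_biScale b S γ H H'
  have hg : (X 0 * X 1 * X 2 * X 3 * (X 1 * X 2 - X 3 * X 0) : MvPolynomial (Fin 4) k) ≠ 0 := by
    refine mul_ne_zero (by simp [X_ne_zero]) fun h0 => ?_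
    simpa using congrArg (eval ![0, 1, 1, 0]) h0
  have hW0 : W = 0 := eq_zero_of_eval_eq_zero_of_eval_ne_zero hg fun x hx => by
    simp only [map_mul, map_sub, eval_X, mul_ne_zero_iff, sub_ne_zero] at hx
    obtain ⟨⟨⟨⟨hx0, hx1⟩, hx2⟩, hx3⟩, hne⟩ := hx
    rw [hW]
    exact evalAt_pbr_biScale_eq_zero b S h hfm hbf hbm hcond γ hx0 hx1 hx2 hx3 hne hH hH'
  rw [← hWcoeff, hW0, coeff_zero]

end Criterion

/-- Theorem 2.3, the criterion: `Z_{(q,f)}` is Poisson commutative if and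
only if `γ_f([(d_{φ_s(γ)}H)_f , (d_{φ_{s'}(γ)}H')_f]) = 0` for every `γ ∈ q*`, all nonzero
`s, s'` and all `H, H'` in the Poisson centre. -/
theorem Zalg_poissonCommutative_iff
    (b : Module.Basis (Fin n) k q) (S : Finset (Fin n))
    (f : LieSubalgebra k q) (m : Submodule k q)
    (h : IsCompl f.toSubmodule m)
    (hfm : ∀ a ∈ f, ∀ v ∈ m, ⁅a, v⁆ ∈ m)
    (hbf : ∀ i ∈ S, b i ∈ f) (hbm : ∀ i ∉ S, b i ∈ m) :
    (∀ F ∈ Zalg b S, ∀ G ∈ Zalg b S, pbr b F G = 0)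
      ↔ (∀ (γ : Module.Dual k q) (s s' : k), s ≠ 0 → s' ≠ 0 →
          ∀ H ∈ poissonCentre b, ∀ H' ∈ poissonCentre b,
            γ (projF f.toSubmodule m h
              ⁅projF f.toSubmodule m h (diffAt b (phiDual f.toSubmodule m h s γ) H),
               projF f.toSubmodule m h (diffAt b (phiDual f.toSubmodule m h s' γ) H')⁆) = 0) := by
  refine ⟨fun hZ γ s s' _ _ H hH H' hH' =>
    projBracket_eq_zero_of_pbr_eq_zero b S h hfm hbf hbm hZ γ s s' hH hH', fun hcond => ?_⟩
  intro F hF G hG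
  refine pbr_eq_zero_of_mem_adjoin b ?_ hF hG
  rintro _ ⟨H, hH, i, j, rfl⟩ _ ⟨H', hH', i', j', rfl⟩
  exact pbr_biComponent_eq_zero b S h hfm hbf hbm hcond hH hH' i j i' j'

end PoissonLie
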